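/- Let y : [0,∞) → E be a differentiable curve satisfying the perturbed dynamics y'(t) = v(y(t)) + w(t), where v is the nonconformity velocity field, ∇S(y(t)) ≠ 0 for all t, and w(t) ∈ E is tangential in the sense that ⟨∇S(y(t)), w(t)⟩ = 0 for all t. Then the score error ε(t) := S(y(t)) − τ still satisfies ε'(t) = −λ ε(t), and hence ε(t) = ε(0)·e^{−λ t}; tangential perturbations do not alter the score dynamics. -/

import Mathlib

open scoped RealInnerProductSpace

/-- The nonconformity velocity field
`v(y) = -λ (S y - τ) ∇S(y) / ‖∇S(y)‖²`. -/
noncomputable def ncVel {n : ℕ} (S : EuclideanSpace ℝ (Fin n) → ℝ) (τ lam : ℝ)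
    (y : EuclideanSpace ℝ (Fin n)) : EuclideanSpace ℝ (Fin n) :=
  (-lam * (S y - τ) / ‖gradient S y‖ ^ 2) • gradient S y

/-!
Along any curve, `d/dt S(y(t)) = ⟪∇S(y(t)), y'(t)⟫`. The field `v` is built so that
`⟪∇S, v⟫ = -λ (S - τ)`, and a tangential `w` adds nothing to this inner product; hence
`ε = S ∘ y - τ` solves the scalar linear equation `ε' = -λ ε`, whose solutions are
`ε(0) e^{-λ t}` because `ε(t) e^{λ t}` has zero derivative.
-/

section

variable {F : Type*} [NormedAddCommGroup F] [InnerProductSpace ℝ F]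

theorem HasGradientAt.comp_hasDerivAt [CompleteSpace F] {S : F → ℝ} {g : F} {y : ℝ → F}
    {y' : F} {t : ℝ} (hS : HasGradientAt S g (y t)) (hy : HasDerivAt y y' t) :
    HasDerivAt (fun s => S (y s)) ⟪g, y'⟫ t := by
  have h := hS.hasFDerivAt.comp_hasDerivAt t hy
  rwa [InnerProductSpace.toDual_apply_apply] at h

theorem inner_div_norm_sq_smul_self {g : F} (hg : g ≠ 0) (c : ℝ) :
    ⟪g, (c / ‖g‖ ^ 2) • g⟫ = c := by
  have hg' : ‖g‖ ^ 2 ≠ 0 := by positivity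
  rw [inner_smul_right, real_inner_self_eq_norm_sq, div_mul_cancel₀ c hg']

end

theorem inner_gradient_ncVel {n : ℕ} {S : EuclideanSpace ℝ (Fin n) → ℝ} (τ lam : ℝ)
    {x : EuclideanSpace ℝ (Fin n)} (hx : gradient S x ≠ 0) :
    ⟪gradient S x, ncVel S τ lam x⟫ = -lam * (S x - τ) :=
  inner_div_norm_sq_smul_self hx _

theorem eq_mul_exp_of_hasDerivAt_mul_self {f : ℝ → ℝ} {a c : ℝ}
    (hf : ∀ t, a ≤ t → HasDerivAt f (c * f t) t) :
    ∀ t, a ≤ t → f t = f a * Real.exp (c * (t - a)) := by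
  intro t hat
  set g : ℝ → ℝ := fun s => f s * Real.exp (-c * (s - a))
  have hg : ∀ s, a ≤ s → HasDerivAt g 0 s := by
    intro s has
    have hexp : HasDerivAt (fun s => Real.exp (-c * (s - a))) (Real.exp (-c * (s - a)) * -c) s :=
      (((hasDerivAt_id s).sub_const a).const_mul (-c)).exp.congr_deriv (by simp)
    exact ((hf s has).mul hexp).congr_deriv (by ring)
  have hconst : g t = g a :=
    constant_of_has_deriv_right_zero (fun s hs => (hg s hs.1).continuousAt.continuousWithinAt)
      (fun s hs => (hg s hs.1).hasDerivWithinAt) t (Set.right_mem_Icc.2 hat)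
  calc f t = g t * Real.exp (c * (t - a)) := by
        simp only [g, mul_assoc, ← Real.exp_add, neg_mul, neg_add_cancel, Real.exp_zero, mul_one]
    _ = f a * Real.exp (c * (t - a)) := by rw [hconst]; simp [g]

theorem tangential_perturbation_score_dynamics_general {n : ℕ}
    (S : EuclideanSpace ℝ (Fin n) → ℝ)
    (hS : Differentiable ℝ S) (τ lam : ℝ)
    (y : ℝ → EuclideanSpace ℝ (Fin n)) (w : ℝ → EuclideanSpace ℝ (Fin n))
    (hy : ∀ t : ℝ, 0 ≤ t → HasDerivAt y (ncVel S τ lam (y t) + w t) t)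
    (hgrad : ∀ t : ℝ, 0 ≤ t → gradient S (y t) ≠ 0)
    (htan : ∀ t : ℝ, 0 ≤ t → ⟪gradient S (y t), w t⟫ = 0) :
    (∀ t : ℝ, 0 ≤ t →
        HasDerivAt (fun s => S (y s) - τ) (-lam * (S (y t) - τ)) t) ∧
      ∀ t : ℝ, 0 ≤ t →
        S (y t) - τ = (S (y 0) - τ) * Real.exp (-lam * t) := by
  have hε : ∀ t : ℝ, 0 ≤ t →
      HasDerivAt (fun s => S (y s) - τ) (-lam * (S (y t) - τ)) t := by
    intro t ht
    have hchain := (hS (y t)).hasGradientAt.comp_hasDerivAt (hy t ht)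
    rw [inner_add_right, htan t ht, add_zero, inner_gradient_ncVel τ lam (hgrad t ht)] at hchain
    exact hchain.sub_const τ
  refine ⟨hε, fun t ht => ?_⟩
  simpa only [sub_zero] using eq_mul_exp_of_hasDerivAt_mul_self hε t ht

/-- tangential perturbations of the nonconformity flow do not
alter the score dynamics: under `y'(t) = v(y(t)) + w(t)` with
`⟪∇S(y(t)), w(t)⟫ = 0`, the score error still satisfies `ε'(t) = -λ ε(t)`
and hence `ε(t) = ε(0) e^{-λ t}`. -/
theorem tangential_perturbation_score_dynamics {n : ℕ}
    (S : EuclideanSpace ℝ (Fin n) → ℝ)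
    (hS : Differentiable ℝ S) (τ lam : ℝ) (hlam : 0 < lam)
    (y : ℝ → EuclideanSpace ℝ (Fin n)) (w : ℝ → EuclideanSpace ℝ (Fin n))
    (hy : ∀ t : ℝ, 0 ≤ t → HasDerivAt y (ncVel S τ lam (y t) + w t) t)
    (hgrad : ∀ t : ℝ, 0 ≤ t → gradient S (y t) ≠ 0)
    (htan : ∀ t : ℝ, 0 ≤ t → ⟪gradient S (y t), w t⟫ = 0) :
    (∀ t : ℝ, 0 ≤ t →
        HasDerivAt (fun s => S (y s) - τ) (-lam * (S (y t) - τ)) t) ∧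
      ∀ t : ℝ, 0 ≤ t →
        S (y t) - τ = (S (y 0) - τ) * Real.exp (-lam * t) :=
  tangential_perturbation_score_dynamics_general S hS τ lam y w hy hgrad htan
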